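/- Let m ≥ 3, let g be a positive element of DA(m), let l ≥ 0 be an integer, and let (a,b) be an ordering of (x_1,x_2), i.e. {a,b} = {x_1,x_2}. Then the number of right divisors of g of the form a^s b^t with integers s, t ≥ 0 and s + t = l is at most d(g) + 1. -/

import Mathlib

namespace ArtinRD

/-- The alternating product `xyxy...` with `m` factors, starting with `x`. -/
def altProd {G : Type*} [Monoid G] : ℕ → G → G → G
  | 0, _, _ => 1
  | n + 1, x, y => x * altProd n y x

/-- The Artin relators determined by a Coxeter-type matrix `M` (`⊤` meaning `∞`). -/
def artinRels (n : ℕ) (M : Fin n → Fin n → ℕ∞) : Set (FreeGroup (Fin n)) :=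
  {r | ∃ i j : Fin n, i ≠ j ∧ ∃ m : ℕ, M i j = (m : ℕ∞) ∧
    r = altProd m (FreeGroup.of i) (FreeGroup.of j) *
        (altProd m (FreeGroup.of j) (FreeGroup.of i))⁻¹}

/-- The Artin group associated to the matrix `M`. -/
abbrev ArtinGroup (n : ℕ) (M : Fin n → Fin n → ℕ∞) : Type := PresentedGroup (artinRels n M)

/-- The standard generator `x_i` of the Artin group. -/
def gen (n : ℕ) (M : Fin n → Fin n → ℕ∞) (i : Fin n) : ArtinGroup n M := PresentedGroup.of i

/-- The set `A = {x_1^{±1}, ..., x_n^{±1}}` of standard letters. -/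
def genSet (n : ℕ) (M : Fin n → Fin n → ℕ∞) : Set (ArtinGroup n M) :=
  {g | ∃ i : Fin n, g = gen n M i ∨ g = (gen n M i)⁻¹}

/-- Word length of `g` with respect to a set `S`: the least `N` such that `g` is a
product of `N` elements of `S`. -/
noncomputable def wordLength {G : Type*} [Group G] (S : Set G) (g : G) : ℕ :=
  sInf {N : ℕ | ∃ w : List G, (∀ a ∈ w, a ∈ S) ∧ w.length = N ∧ w.prod = g}

/-- The word length on an Artin group with respect to the standard letters. -/
noncomputable def ℓA (n : ℕ) (M : Fin n → Fin n → ℕ∞) : ArtinGroup n M → ℕ :=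
  wordLength (genSet n M)

/-- A letter: a generator index together with a sign (`true` = positive). -/
abbrev Letter (n : ℕ) := Fin n × Bool

/-- The group element corresponding to a letter. -/
def toGen (n : ℕ) (M : Fin n → Fin n → ℕ∞) (l : Letter n) : ArtinGroup n M :=
  if l.2 then gen n M l.1 else (gen n M l.1)⁻¹

/-- The group element represented by a word over the letters. -/
def wordElt (n : ℕ) (M : Fin n → Fin n → ℕ∞) (w : List (Letter n)) : ArtinGroup n M :=
  (w.map (toGen n M)).prod

/-- A word is geodesic if its length equals the word length of the element it represents. -/
def IsGeodesic (n : ℕ) (M : Fin n → Fin n → ℕ∞) (w : List (Letter n)) : Prop :=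
  wordLength (genSet n M) (wordElt n M w) = w.length

/-- `h` is a left divisor of `g`: the factorisation `g = h ⬝ (h⁻¹ g)` is geodesic. -/
def IsLeftDiv {G : Type*} [Group G] (ℓ : G → ℕ) (h g : G) : Prop :=
  ℓ h + ℓ (h⁻¹ * g) = ℓ g

/-- `h` is a right divisor of `g`: the factorisation `g = (g h⁻¹) ⬝ h` is geodesic. -/
def IsRightDiv {G : Type*} [Group G] (ℓ : G → ℕ) (h g : G) : Prop :=
  ℓ (g * h⁻¹) + ℓ h = ℓ g

/-- The two-generator ("dihedral") subgroup `G(i,j)`. -/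
def Gij (n : ℕ) (M : Fin n → Fin n → ℕ∞) (i j : Fin n) : Subgroup (ArtinGroup n M) :=
  Subgroup.closure {gen n M i, gen n M j}

/-- The letters `x_i^{±1}, x_j^{±1}` as group elements. -/
def lettersIJ (n : ℕ) (M : Fin n → Fin n → ℕ∞) (i j : Fin n) : Set (ArtinGroup n M) :=
  {gen n M i, (gen n M i)⁻¹, gen n M j, (gen n M j)⁻¹}

/-- The maximal `{x_i,x_j}`-prefix of a word. -/
def ijPrefix (n : ℕ) (i j : Fin n) (w : List (Letter n)) : List (Letter n) :=
  w.takeWhile (fun l => l.1 == i || l.1 == j)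

/-- `h` is a left divisor of `g` lying in `G(i,j)` of maximal word length. -/
def IsMaxLD (n : ℕ) (M : Fin n → Fin n → ℕ∞) (i j : Fin n) (g h : ArtinGroup n M) : Prop :=
  h ∈ Gij n M i j ∧ IsLeftDiv (ℓA n M) h g ∧
    ∀ h' ∈ Gij n M i j, IsLeftDiv (ℓA n M) h' g → ℓA n M h' ≤ ℓA n M h

/-- `h` is a right divisor of `g` lying in `G(i,j)` of maximal word length. -/
def IsMaxRD (n : ℕ) (M : Fin n → Fin n → ℕ∞) (i j : Fin n) (g h : ArtinGroup n M) : Prop :=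
  h ∈ Gij n M i j ∧ IsRightDiv (ℓA n M) h g ∧
    ∀ h' ∈ Gij n M i j, IsRightDiv (ℓA n M) h' g → ℓA n M h' ≤ ℓA n M h

/-- The Coxeter matrix of the dihedral Artin group `DA(m)`. -/
def DMat (m : ℕ) : Fin 2 → Fin 2 → ℕ∞ := fun i j => if i = j then 1 else (m : ℕ∞)

/-- The dihedral Artin group `DA(m) = ⟨x₁, x₂ ∣ ₘ(x₁,x₂) = ₘ(x₂,x₁)⟩`. -/
abbrev DA (m : ℕ) : Type := ArtinGroup 2 (DMat m)

/-- The word length on `DA(m)` with respect to `{x₁^{±1}, x₂^{±1}}`. -/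
noncomputable def ℓD (m : ℕ) : DA m → ℕ := ℓA 2 (DMat m)

/-- The Garside element `Δ = ₘ(x₁,x₂)` of `DA(m)`. -/
def Delta (m : ℕ) : DA m := altProd m (gen 2 (DMat m) 0) (gen 2 (DMat m) 1)

/-- A positive element of `DA(m)`: a product of the generators. -/
def posElt (m : ℕ) (g : DA m) : Prop :=
  g ∈ Submonoid.closure ({gen 2 (DMat m) 0, gen 2 (DMat m) 1} : Set (DA m))

/-- A negative element of `DA(m)`: a product of the inverses of the generators. -/
def negElt (m : ℕ) (g : DA m) : Prop :=
  g ∈ Submonoid.closure ({(gen 2 (DMat m) 0)⁻¹, (gen 2 (DMat m) 1)⁻¹} : Set (DA m))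

/-- `k` is the largest exponent such that `Δ^k` is a left divisor of `g`
(i.e. `d(g) = k` for a positive element `g`). -/
def IsMaxDeltaPow (m : ℕ) (k : ℕ) (g : DA m) : Prop :=
  IsLeftDiv (ℓD m) (Delta m ^ k) g ∧ ∀ k' : ℕ, IsLeftDiv (ℓD m) (Delta m ^ k') g → k' ≤ k

/-- `k` is the largest exponent such that `Δ^{-k}` is a left divisor of `g`
(i.e. `d(g) = k` for a negative element `g`). -/
def IsMaxNegDeltaPow (m : ℕ) (k : ℕ) (g : DA m) : Prop :=
  IsLeftDiv (ℓD m) ((Delta m)⁻¹ ^ k) g ∧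
    ∀ k' : ℕ, IsLeftDiv (ℓD m) ((Delta m)⁻¹ ^ k') g → k' ≤ k

/-!
Every element of `DA(m)` is `Δ ^ k` times a positive word `W` to which no relation applies (no
alternating factor of length `m`). Right multiplication by the generators and their inverses acts
on such pairs `(k, W)`; the braid relation holds there because appending an alternating word of
length `m` to `W` yields `Δ` times the image of `W` under conjugation by `Δ`. This action gives
the normal form of every element.

The exponent sum bounds the word length from below, with equality exactly on positive elements.
Hence if `a ^ s * b ^ t` is a right divisor of a positive `g`, then `g * (a ^ s * b ^ t)⁻¹` is
positive, so its normal form has `k ≥ 0`. Removing `b ^ t` and then `a ^ s` from the normal form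
`(k, W)` of `g`, each letter that the current word does not end with costs one `Δ`, which
confines the admissible `s` to at most `k + 1` consecutive values; and `Δ ^ k` left-divides `g`, so
`k ≤ d(g)`.
-/

section Words

@[simp] lemma not_iterate_add_two (n : ℕ) (c : Bool) : not^[n + 2] c = not^[n] c := by
  rw [Function.iterate_add_apply]
  exact congrArg _ (congrFun (Bool.involutive_not.iterate_two_mul 1) c)

lemma not_iterate_self (n : ℕ) (c : Bool) : not^[n] (not^[n] c) = c := by
  rw [← Function.iterate_add_apply, ← two_mul]
  exact congrFun (Bool.involutive_not.iterate_two_mul n) c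

lemma not_iterate_not (n : ℕ) (c : Bool) : not^[n] (!c) = !(not^[n] c) :=
  Function.Commute.iterate_self not n c

def altWord : ℕ → Bool → List Bool
  | 0, _ => []
  | n + 1, c => c :: altWord n (!c)

@[simp] lemma altWord_zero (c : Bool) : altWord 0 c = [] := rfl

@[simp] lemma altWord_succ (n : ℕ) (c : Bool) : altWord (n + 1) c = c :: altWord n (!c) := rfl

@[simp] lemma length_altWord (n : ℕ) (c : Bool) : (altWord n c).length = n := by
  induction n generalizing c <;> simp [*]

lemma altWord_add (a b : ℕ) (c : Bool) :
    altWord (a + b) c = altWord a c ++ altWord b (not^[a] c) := by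
  induction a generalizing c with
  | zero => simp
  | succ a ih => rw [Nat.add_right_comm, altWord_succ, ih, Function.iterate_succ_apply]; rfl

lemma altWord_succ' (n : ℕ) (c : Bool) : altWord (n + 1) c = altWord n c ++ [not^[n] c] :=
  altWord_add n 1 c

lemma reverse_altWord_succ (n : ℕ) (c : Bool) :
    (altWord (n + 1) c).reverse = not^[n] c :: (altWord n c).reverse := by
  rw [altWord_succ']; simp

lemma reverse_altWord (n : ℕ) (c : Bool) : (altWord n c).reverse = altWord n (not^[n + 1] c) := by
  induction n generalizing c with
  | zero => rfl
  | succ n ih =>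
    rw [altWord_succ, List.reverse_cons, ih, altWord_succ', ← Function.iterate_succ_apply,
      not_iterate_add_two, not_iterate_self]

def altPrefixLength : List Bool → ℕ
  | [] => 0
  | c :: W => if W.head? = some (!c) then altPrefixLength W + 1 else 1

lemma altPrefixLength_cons (c : Bool) (W : List Bool) :
    altPrefixLength (c :: W) = if W.head? = some (!c) then altPrefixLength W + 1 else 1 := rfl

lemma one_le_altPrefixLength_cons (c : Bool) (W : List Bool) : 1 ≤ altPrefixLength (c :: W) := by
  rw [altPrefixLength_cons]; split <;> omega

lemma two_le_altPrefixLength_cons {c : Bool} {W : List Bool} (h : W.head? = some (!c)) :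
    2 ≤ altPrefixLength (c :: W) := by
  obtain ⟨d, W, rfl⟩ := W.exists_cons_of_ne_nil (by rintro rfl; simp at h)
  rw [altPrefixLength_cons, if_pos h]
  have := one_le_altPrefixLength_cons d W
  omega

lemma altPrefixLength_cons_le (c : Bool) (W : List Bool) :
    altPrefixLength (c :: W) ≤ altPrefixLength W + 1 := by
  rw [altPrefixLength_cons]; split <;> omega

lemma take_eq_altWord {W : List Bool} {c : Bool} (hc : W.head? = some c) {n : ℕ}
    (hn : n ≤ altPrefixLength W) : W.take n = altWord n c := by
  induction W generalizing c n with
  | nil => simp at hc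
  | cons d W ih =>
    obtain rfl : d = c := by simpa using hc
    rcases n with _ | n
    · rfl
    rw [altPrefixLength_cons] at hn
    split at hn
    · rw [List.take_succ_cons, altWord_succ, ih ‹_› (by omega)]
    · obtain rfl : n = 0 := by omega
      rfl

lemma take_eq_altWord_of_succ_le_altPrefixLength_cons {W : List Bool} {c : Bool} {n : ℕ}
    (hn : n + 1 ≤ altPrefixLength (c :: W)) : W.take n = altWord n (!c) := by
  simpa using take_eq_altWord (W := c :: W) rfl hn

lemma altPrefixLength_altWord_append (j : ℕ) (c : Bool) (W : List Bool) :
    altPrefixLength (altWord (j + 1) c ++ W) = j + altPrefixLength (not^[j] c :: W) := by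
  induction j generalizing c with
  | zero => simp
  | succ j ih =>
    rw [altWord_succ, List.cons_append, altPrefixLength_cons, if_pos (by simp), ih,
      Function.iterate_succ_apply]
    omega

lemma altPrefixLength_reverse_altWord_append (j : ℕ) (c : Bool) (W : List Bool) :
    altPrefixLength ((altWord (j + 1) c).reverse ++ W) = j + altPrefixLength (c :: W) := by
  rw [reverse_altWord, altPrefixLength_altWord_append, not_iterate_add_two, not_iterate_self]

def flipWord (m : ℕ) (W : List Bool) : List Bool := W.map (not^[m])

@[simp] lemma flipWord_nil (m : ℕ) : flipWord m [] = [] := rfl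

@[simp] lemma flipWord_cons (m : ℕ) (c : Bool) (W : List Bool) :
    flipWord m (c :: W) = not^[m] c :: flipWord m W := rfl

lemma flipWord_append (m : ℕ) (W V : List Bool) :
    flipWord m (W ++ V) = flipWord m W ++ flipWord m V := List.map_append ..

lemma flipWord_reverse (m : ℕ) (W : List Bool) :
    flipWord m W.reverse = (flipWord m W).reverse := List.map_reverse ..

lemma flipWord_drop (m : ℕ) (W : List Bool) (n : ℕ) :
    flipWord m (W.drop n) = (flipWord m W).drop n := List.map_drop ..

@[simp] lemma flipWord_flipWord (m : ℕ) (W : List Bool) : flipWord m (flipWord m W) = W := by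
  simp [flipWord, Function.comp_def, not_iterate_self]

lemma flipWord_altWord (m n : ℕ) (c : Bool) :
    flipWord m (altWord n c) = altWord n (not^[m] c) := by
  induction n generalizing c <;> simp [*, not_iterate_not]

lemma head?_flipWord_eq_some {m : ℕ} {W : List Bool} {c : Bool} :
    (flipWord m W).head? = some (not^[m] c) ↔ W.head? = some c := by
  cases W <;> simp [(Bool.involutive_not.injective.iterate m).eq_iff]

@[simp] lemma altPrefixLength_flipWord (m : ℕ) (W : List Bool) :
    altPrefixLength (flipWord m W) = altPrefixLength W := by
  induction W with
  | nil => rfl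
  | cons c W ih => simp only [flipWord_cons, altPrefixLength_cons, ← not_iterate_not,
      head?_flipWord_eq_some, ih]

end Words

section NormalForms

/-- A positive word to which no relation applies: no factor is alternating of length `m`. -/
def DeltaFree (m : ℕ) (W : List Bool) : Prop := ∀ n, altPrefixLength (W.drop n) < m

variable {m : ℕ}

lemma deltaFree_nil (hm : 0 < m) : DeltaFree m [] := fun _ => by rw [List.drop_nil]; exact hm

lemma deltaFree_cons {c : Bool} {W : List Bool} :
    DeltaFree m (c :: W) ↔ altPrefixLength (c :: W) < m ∧ DeltaFree m W :=
  ⟨fun h => ⟨h 0, fun n => h (n + 1)⟩, fun ⟨h₀, h⟩ n => n.casesOn h₀ h⟩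

lemma DeltaFree.drop {W : List Bool} (hW : DeltaFree m W) (n : ℕ) : DeltaFree m (W.drop n) :=
  fun k => by simpa [List.drop_drop] using hW (n + k)

lemma DeltaFree.flipWord {W : List Bool} (hW : DeltaFree m W) (n : ℕ) :
    DeltaFree m (flipWord n W) :=
  fun k => by simpa [← flipWord_drop] using hW k

lemma DeltaFree.reverse_altWord_append {W : List Bool} (hW : DeltaFree m W) {c : Bool} {j : ℕ}
    (hj : j + altPrefixLength (c :: W) ≤ m) : DeltaFree m ((altWord j c).reverse ++ W) := by
  induction j with
  | zero => simpa
  | succ j ih =>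
    rw [reverse_altWord_succ, List.cons_append, deltaFree_cons, ← List.cons_append,
      ← reverse_altWord_succ, altPrefixLength_reverse_altWord_append]
    exact ⟨by omega, ih (by omega)⟩

/-- `(k, W)` stands for `Δ ^ k` times the positive word `W` read backwards: right
multiplication by a letter acts at the head of `W`. -/
def mulGen (m : ℕ) (c : Bool) (z : ℤ × List Bool) : ℤ × List Bool :=
  if altPrefixLength (c :: z.2) < m then (z.1, c :: z.2)
  else (z.1 + 1, flipWord m (z.2.drop (m - 1)))

def mulGenInv (m : ℕ) (c : Bool) (z : ℤ × List Bool) : ℤ × List Bool :=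
  if z.2.head? = some c then (z.1, z.2.tail)
  else (z.1 - 1, altWord (m - 1) (!c) ++ flipWord m z.2)

lemma eq_altWord_append_drop {W : List Bool} {c : Bool} (h : ¬ altPrefixLength (c :: W) < m) :
    W = altWord (m - 1) (!c) ++ W.drop (m - 1) := by
  have := one_le_altPrefixLength_cons c W
  rw [← take_eq_altWord_of_succ_le_altPrefixLength_cons (W := W) (c := c) (n := m - 1) (by omega),
    List.take_append_drop]

lemma altWord_pred_eq_reverse (hm : 0 < m) (c : Bool) :
    altWord (m - 1) (!c) = (altWord (m - 1) (not^[m + 1] c)).reverse := by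
  rw [reverse_altWord, Nat.sub_add_cancel hm, Function.iterate_succ_apply, not_iterate_self]

lemma DeltaFree.mulGen {z : ℤ × List Bool} (hz : DeltaFree m z.2) (c : Bool) :
    DeltaFree m (mulGen m c z).2 := by
  unfold ArtinRD.mulGen
  split
  · exact deltaFree_cons.2 ⟨‹_›, hz⟩
  · exact (hz.drop _).flipWord m

lemma DeltaFree.mulGenInv (hm : 2 ≤ m) {z : ℤ × List Bool} (hz : DeltaFree m z.2) (c : Bool) :
    DeltaFree m (mulGenInv m c z).2 := by
  unfold ArtinRD.mulGenInv
  split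
  · simpa using hz.drop 1
  · rw [altWord_pred_eq_reverse (by omega)]
    refine (hz.flipWord m).reverse_altWord_append ?_
    rw [altPrefixLength_cons, if_neg (by
      rwa [← Function.iterate_succ_apply' not, not_iterate_add_two, head?_flipWord_eq_some])]
    omega

lemma mulGenInv_mulGen (hm : 2 ≤ m) (c : Bool) (k : ℤ) {W : List Bool} (hW : DeltaFree m W) :
    mulGenInv m c (mulGen m c (k, W)) = (k, W) := by
  unfold ArtinRD.mulGen
  dsimp only
  split
  · simp [ArtinRD.mulGenInv]
  · rename_i h
    obtain ⟨n, rfl⟩ : ∃ n, m = n + 2 := ⟨m - 2, by omega⟩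
    have hrun := hW 0
    rw [List.drop_zero, eq_altWord_append_drop h, show n + 2 - 1 = n + 1 from rfl,
      altPrefixLength_altWord_append] at hrun
    have hhead : ¬ (flipWord (n + 2) (W.drop (n + 1))).head? = some c := by
      rw [← not_iterate_self (n + 2) c, head?_flipWord_eq_some]
      intro hc
      have e : (!(not^[n] (!c))) = not^[n + 2] c := by simp [not_iterate_not]
      have := two_le_altPrefixLength_cons (W := W.drop (n + 1)) (c := not^[n] (!c))
        (by rw [e]; exact hc)
      omega
    simp only [ArtinRD.mulGenInv, flipWord_flipWord, add_sub_cancel_right]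
    rw [show n + 2 - 1 = n + 1 from rfl, if_neg hhead]
    exact congrArg _ (eq_altWord_append_drop h).symm

lemma mulGen_mulGenInv (hm : 2 ≤ m) (c : Bool) (k : ℤ) {W : List Bool} (hW : DeltaFree m W) :
    mulGen m c (mulGenInv m c (k, W)) = (k, W) := by
  unfold ArtinRD.mulGenInv
  split
  · rename_i h
    obtain ⟨d, W, rfl⟩ := W.exists_cons_of_ne_nil (by rintro rfl; simp at h)
    obtain rfl : d = c := by simpa using h
    simp [ArtinRD.mulGen, (deltaFree_cons.1 hW).1]
  · have hrun : ¬ altPrefixLength (c :: (altWord (m - 1) (!c) ++ flipWord m W)) < m := by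
      rw [← List.cons_append, ← altWord_succ, show m - 1 + 1 = m - 2 + 1 + 1 by omega,
        altPrefixLength_altWord_append]
      have := one_le_altPrefixLength_cons (not^[m - 2 + 1] c) (flipWord m W)
      omega
    simp only [ArtinRD.mulGen, if_neg hrun, sub_add_cancel]
    rw [List.drop_left' (by simp), flipWord_flipWord]

end NormalForms

section MulWord

variable {m : ℕ}

def mulWord (m : ℕ) (L : List Bool) (z : ℤ × List Bool) : ℤ × List Bool :=
  L.foldl (fun z c => mulGen m c z) z

lemma mulWord_append (L₁ L₂ : List Bool) (z : ℤ × List Bool) :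
    mulWord m (L₁ ++ L₂) z = mulWord m L₂ (mulWord m L₁ z) := List.foldl_append ..

lemma mulWord_of_deltaFree {L W : List Bool} (h : DeltaFree m (L.reverse ++ W)) (k : ℤ) :
    mulWord m L (k, W) = (k, L.reverse ++ W) := by
  induction L using List.reverseRecOn with
  | nil => rfl
  | append_singleton L c ih =>
    simp only [List.reverse_append, List.reverse_singleton, List.cons_append, deltaFree_cons]
      at h ⊢
    rw [mulWord_append, ih h.2]
    exact if_pos h.1

/-- These `m - altPrefixLength (c :: W) + 1` letters complete the alternating prefix of `c :: W`
to a relator, which is absorbed into `Δ`. -/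
lemma mulWord_altWord_eq_drop {W : List Bool} (hW : DeltaFree m W) (c : Bool) (k : ℤ) :
    mulWord m (altWord (m - altPrefixLength (c :: W) + 1) c) (k, W) =
      (k + 1, flipWord m (W.drop (altPrefixLength (c :: W) - 1))) := by
  have hn := (altPrefixLength_cons_le c W).trans (hW 0)
  have hn₁ := one_le_altPrefixLength_cons c W
  set j := m - altPrefixLength (c :: W)
  have hrun : ¬ altPrefixLength (not^[j] c :: ((altWord j c).reverse ++ W)) < m := by
    rw [← List.cons_append, ← reverse_altWord_succ, altPrefixLength_reverse_altWord_append]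
    omega
  rw [altWord_succ', mulWord_append, mulWord_of_deltaFree (hW.reverse_altWord_append (by omega))]
  simp only [mulWord, List.foldl_cons, List.foldl_nil, mulGen, if_neg hrun]
  rw [show m - 1 = (altWord j c).reverse.length + (altPrefixLength (c :: W) - 1) by simp; omega,
    List.drop_append, List.drop_of_length_le (by simp)]
  simp

lemma reverse_altWord_append_flipWord_drop {W : List Bool} (hW : DeltaFree m W) (c : Bool) :
    (altWord (altPrefixLength (c :: W) - 1) (not^[m - altPrefixLength (c :: W) + 1] c)).reverse ++
      flipWord m (W.drop (altPrefixLength (c :: W) - 1)) = flipWord m W := by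
  have hn := (altPrefixLength_cons_le c W).trans (hW 0)
  have hn₁ := one_le_altPrefixLength_cons c W
  conv_rhs => rw [← List.take_append_drop (altPrefixLength (c :: W) - 1) W, flipWord_append,
    take_eq_altWord_of_succ_le_altPrefixLength_cons (c := c) (by omega), flipWord_altWord]
  rw [reverse_altWord, ← Function.iterate_add_apply, ← Function.iterate_succ_apply,
    show altPrefixLength (c :: W) - 1 + 1 + (m - altPrefixLength (c :: W) + 1) = m + 1 by omega]

/-- The braid relation on normal forms: `W Δ = Δ (flipWord m W)`. -/
lemma mulWord_altWord {W : List Bool} (hW : DeltaFree m W) (c : Bool) (k : ℤ) :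
    mulWord m (altWord m c) (k, W) = (k + 1, flipWord m W) := by
  have hn := (altPrefixLength_cons_le c W).trans (hW 0)
  have hn₁ := one_le_altPrefixLength_cons c W
  have hsplit := altWord_add (m - altPrefixLength (c :: W) + 1) (altPrefixLength (c :: W) - 1) c
  rw [show m - altPrefixLength (c :: W) + 1 + (altPrefixLength (c :: W) - 1) = m by omega]
    at hsplit
  have hrest := reverse_altWord_append_flipWord_drop hW c
  rw [hsplit, mulWord_append, mulWord_altWord_eq_drop hW,
    mulWord_of_deltaFree (by rw [hrest]; exact hW.flipWord m), hrest]

end MulWord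

section ArtinGroup

lemma map_altProd {M N F : Type*} [Monoid M] [Monoid N] [FunLike F M N] [MonoidHomClass F M N]
    (f : F) (n : ℕ) (x y : M) : f (altProd n x y) = altProd n (f x) (f y) := by
  induction n generalizing x y with
  | zero => exact map_one f
  | succ n ih => simp only [altProd, map_mul, ih]

lemma prod_map_altWord {M : Type*} [Monoid M] (f : Bool → M) (n : ℕ) (c : Bool) :
    ((altWord n c).map f).prod = altProd n (f c) (f !c) := by
  induction n generalizing c with
  | zero => rfl
  | succ n ih =>
    simp only [altWord_succ, List.map_cons, List.prod_cons, ih, Bool.not_not, altProd]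

lemma altProd_inv_comm {G : Type*} [Group G] {n : ℕ} {x y : G}
    (h : altProd n x y = altProd n y x) : altProd n x⁻¹ y⁻¹ = altProd n y⁻¹ x⁻¹ := by
  let f : Bool → G := fun c => bif c then y else x
  have hf : ∀ c, altProd n (f c) (f !c) = altProd n x y := by
    rintro (_ | _)
    exacts [rfl, h.symm]
  -- the inverse of an alternating product is the alternating product of the inverses, reversed
  have key : ∀ c, altProd n (f c)⁻¹ (f !c)⁻¹ = (altProd n x y)⁻¹ := by
    intro c
    rw [← hf (not^[n + 1] c), ← prod_map_altWord, List.prod_inv_reverse, List.map_map,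
      ← List.map_reverse, reverse_altWord, not_iterate_self, prod_map_altWord]
    rfl
  exact (key false).trans (key true).symm

variable {n : ℕ} {M : Fin n → Fin n → ℕ∞}

lemma altProd_gen_comm {i j : Fin n} (hij : i ≠ j) {k : ℕ} (hk : M i j = k) :
    altProd k (gen n M i) (gen n M j) = altProd k (gen n M j) (gen n M i) := by
  have h := PresentedGroup.mk_eq_mk_of_mul_inv_mem (rels := artinRels n M)
    ⟨i, j, hij, k, hk, rfl⟩
  rwa [map_altProd, map_altProd] at h

lemma lift_eq_one_of_mem_artinRels {G : Type*} [Group G] {f : Fin n → G}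
    (hf : ∀ i j, i ≠ j → ∀ k : ℕ, M i j = k →
      altProd k (f i) (f j) = altProd k (f j) (f i)) :
    ∀ r ∈ artinRels n M, FreeGroup.lift f r = 1 := by
  rintro _ ⟨i, j, hij, k, hk, rfl⟩
  rw [map_mul, map_inv, map_altProd, map_altProd, FreeGroup.lift_apply_of,
    FreeGroup.lift_apply_of, hf i j hij k hk, mul_inv_cancel]

lemma mem_closure_genSet (g : ArtinGroup n M) : g ∈ Submonoid.closure (genSet n M) := by
  have hg : g ∈ (Subgroup.closure (Set.range (gen n M))).toSubmonoid :=
    (PresentedGroup.closure_range_of _).symm ▸ Subgroup.mem_top g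
  rw [Subgroup.closure_toSubmonoid] at hg
  refine Submonoid.closure_mono ?_ hg
  rintro _ (⟨i, rfl⟩ | ⟨i, hi⟩)
  · exact ⟨i, Or.inl rfl⟩
  · exact ⟨i, Or.inr (inv_eq_iff_eq_inv.mp hi.symm)⟩

end ArtinGroup

section Dihedral

variable {m : ℕ}

def genOf (m : ℕ) (c : Bool) : DA m := gen 2 (DMat m) (if c then 1 else 0)

def wordProd (m : ℕ) (W : List Bool) : DA m := (W.map (genOf m)).prod

@[simp] lemma wordProd_nil : wordProd m [] = 1 := rfl

@[simp] lemma wordProd_cons (c : Bool) (W : List Bool) :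
    wordProd m (c :: W) = genOf m c * wordProd m W := List.prod_cons

@[simp] lemma wordProd_append (W V : List Bool) :
    wordProd m (W ++ V) = wordProd m W * wordProd m V := by
  simp [wordProd]

lemma closure_range_genOf : Subgroup.closure (Set.range (genOf m)) = ⊤ := by
  refine eq_top_iff.2 ((PresentedGroup.closure_range_of _).symm.le.trans (Subgroup.closure_mono ?_))
  rintro _ ⟨i, rfl⟩
  fin_cases i
  exacts [⟨false, rfl⟩, ⟨true, rfl⟩]

lemma wordProd_altWord (c : Bool) : wordProd m (altWord m c) = Delta m := by
  rw [wordProd, prod_map_altWord]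
  cases c
  · rfl
  · exact (altProd_gen_comm (by decide) (by simp [DMat])).symm

lemma genOf_mul_Delta (c : Bool) : genOf m c * Delta m = Delta m * genOf m (not^[m] c) := by
  calc genOf m c * Delta m = wordProd m (altWord (m + 1) c) := by
        rw [altWord_succ, wordProd_cons, wordProd_altWord]
    _ = Delta m * genOf m (not^[m] c) := by
        rw [altWord_succ', wordProd_append, wordProd_altWord]
        simp [wordProd]

lemma wordProd_mul_Delta (W : List Bool) :
    wordProd m W * Delta m = Delta m * wordProd m (flipWord m W) := by
  induction W with
  | nil => simp
  | cons c W ih => rw [flipWord_cons, wordProd_cons, wordProd_cons, mul_assoc, ih,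
      ← mul_assoc, genOf_mul_Delta, mul_assoc]

lemma lift_eq_one_of_mem_artinRels_DMat {G : Type*} [Group G] {g : Bool → G}
    (hg : altProd m (g false) (g true) = altProd m (g true) (g false)) :
    ∀ r ∈ artinRels 2 (DMat m), FreeGroup.lift (fun i => g (i = 1)) r = 1 := by
  refine lift_eq_one_of_mem_artinRels fun i j hij k hk => ?_
  obtain rfl : k = m := by simpa [DMat, hij] using hk.symm
  fin_cases i <;> fin_cases j
  exacts [absurd rfl hij, hg, hg.symm, absurd rfl hij]

noncomputable def liftDA {G : Type*} [Group G] (g : Bool → G)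
    (hg : altProd m (g false) (g true) = altProd m (g true) (g false)) : DA m →* G :=
  PresentedGroup.toGroup (lift_eq_one_of_mem_artinRels_DMat hg)

@[simp] lemma liftDA_genOf {G : Type*} [Group G] {g : Bool → G}
    (hg : altProd m (g false) (g true) = altProd m (g true) (g false)) (c : Bool) :
    liftDA g hg (genOf m c) = g c := by
  cases c <;> exact PresentedGroup.toGroup.of _

end Dihedral

section Action

variable {m : ℕ}

def nfEval (m : ℕ) (z : ℤ × List Bool) : DA m := Delta m ^ z.1 * wordProd m z.2.reverse

lemma nfEval_mulGen (hm : 0 < m) (c : Bool) (z : ℤ × List Bool) :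
    nfEval m (mulGen m c z) = nfEval m z * genOf m c := by
  obtain ⟨k, W⟩ := z
  unfold mulGen nfEval
  dsimp only
  split
  · simp [mul_assoc]
  · rename_i h
    have hcW : c :: W = altWord m c ++ W.drop (m - 1) := by
      conv_lhs => rw [eq_altWord_append_drop h]
      rw [← List.cons_append, ← altWord_succ, Nat.sub_add_cancel hm]
    calc Delta m ^ (k + 1) * wordProd m (flipWord m (W.drop (m - 1))).reverse
        = Delta m ^ k * (wordProd m (W.drop (m - 1)).reverse * Delta m) := by
          rw [zpow_add_one, mul_assoc, wordProd_mul_Delta, flipWord_reverse]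
      _ = Delta m ^ k * wordProd m (c :: W).reverse := by
          rw [hcW, List.reverse_append, wordProd_append, reverse_altWord, wordProd_altWord]
      _ = Delta m ^ k * wordProd m W.reverse * genOf m c := by simp [mul_assoc, wordProd]

lemma nfEval_mulGenInv (hm : 2 ≤ m) (c : Bool) {z : ℤ × List Bool} (hz : DeltaFree m z.2) :
    nfEval m (mulGenInv m c z) = nfEval m z * (genOf m c)⁻¹ := by
  rw [eq_mul_inv_iff_mul_eq, ← nfEval_mulGen (by omega), mulGen_mulGenInv hm c z.1 hz]

abbrev NF (m : ℕ) : Type := {z : ℤ × List Bool // DeltaFree m z.2}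

def mulGenPerm (hm : 2 ≤ m) (c : Bool) : Equiv.Perm (NF m) where
  toFun z := ⟨mulGen m c z.1, z.2.mulGen c⟩
  invFun z := ⟨mulGenInv m c z.1, z.2.mulGenInv hm c⟩
  left_inv z := Subtype.ext (mulGenInv_mulGen hm c z.1.1 z.2)
  right_inv z := Subtype.ext (mulGen_mulGenInv hm c z.1.1 z.2)

lemma prod_map_mulGenPerm_apply (hm : 2 ≤ m) (L : List Bool) (z : NF m) :
    ((L.map (mulGenPerm hm)).prod z).1 = mulWord m L.reverse z.1 := by
  induction L with
  | nil => rfl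
  | cons c L ih =>
    rw [List.map_cons, List.prod_cons, Equiv.Perm.mul_apply, List.reverse_cons, mulWord_append,
      ← ih]
    rfl

lemma prod_map_mulGenPerm_altWord (hm : 2 ≤ m) (c : Bool) :
    ((altWord m c).map (mulGenPerm hm)).prod = ((altWord m (!c)).map (mulGenPerm hm)).prod := by
  ext1 ⟨⟨k, W⟩, hW⟩
  refine Subtype.ext ?_
  rw [prod_map_mulGenPerm_apply, prod_map_mulGenPerm_apply, reverse_altWord, reverse_altWord]
  exact (mulWord_altWord hW _ k).trans (mulWord_altWord hW _ k).symm

/-- `nfAction hm g` is right multiplication by `g⁻¹` on normal forms. -/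
noncomputable def nfAction (hm : 2 ≤ m) : DA m →* Equiv.Perm (NF m) :=
  liftDA (fun c => (mulGenPerm hm c)⁻¹) <| altProd_inv_comm <| by
    simpa only [prod_map_altWord, Bool.not_false, Bool.not_true] using
      prod_map_mulGenPerm_altWord hm false

lemma nfAction_genOf (hm : 2 ≤ m) (c : Bool) : nfAction hm (genOf m c) = (mulGenPerm hm c)⁻¹ :=
  liftDA_genOf _ c

noncomputable def normalForm (hm : 2 ≤ m) (g : DA m) : ℤ × List Bool :=
  (nfAction hm g⁻¹ ⟨(0, []), deltaFree_nil (by omega)⟩).1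

lemma deltaFree_normalForm (hm : 2 ≤ m) (g : DA m) : DeltaFree m (normalForm hm g).2 :=
  (nfAction hm g⁻¹ _).2

@[simp] lemma normalForm_one (hm : 2 ≤ m) : normalForm hm 1 = (0, []) := by
  simp only [normalForm, inv_one, map_one]
  rfl

lemma normalForm_mul_genOf (hm : 2 ≤ m) (g : DA m) (c : Bool) :
    normalForm hm (g * genOf m c) = mulGen m c (normalForm hm g) := by
  simp only [normalForm, mul_inv_rev, map_mul, map_inv, nfAction_genOf, inv_inv,
    Equiv.Perm.mul_apply]
  rfl

lemma normalForm_mul_genOf_inv (hm : 2 ≤ m) (g : DA m) (c : Bool) :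
    normalForm hm (g * (genOf m c)⁻¹) = mulGenInv m c (normalForm hm g) := by
  simp only [normalForm, mul_inv_rev, inv_inv, map_mul, nfAction_genOf, Equiv.Perm.mul_apply]
  rfl

lemma nfEval_normalForm (hm : 2 ≤ m) (g : DA m) : nfEval m (normalForm hm g) = g := by
  have hg : g ∈ Subgroup.closure (Set.range (genOf m)) :=
    closure_range_genOf ▸ Subgroup.mem_top g
  induction hg using Subgroup.closure_induction_right with
  | one => simp [nfEval]
  | mul_right x _ _ hy ih =>
    obtain ⟨c, rfl⟩ := hy
    rw [normalForm_mul_genOf, nfEval_mulGen (by omega), ih]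
  | mul_inv_cancel x _ _ hy ih =>
    obtain ⟨c, rfl⟩ := hy
    rw [normalForm_mul_genOf_inv, nfEval_mulGenInv hm c (deltaFree_normalForm hm x), ih]

end Action

section WordLength

open Multiplicative

variable {G : Type*} [Group G] {S : Set G}

lemma wordLength_prod_le {w : List G} (hw : ∀ a ∈ w, a ∈ S) :
    wordLength S w.prod ≤ w.length :=
  Nat.sInf_le ⟨w, hw, rfl, rfl⟩

lemma exists_length_eq_wordLength {g : G} (hg : g ∈ Submonoid.closure S) :
    ∃ w : List G, (∀ a ∈ w, a ∈ S) ∧ w.length = wordLength S g ∧ w.prod = g := by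
  obtain ⟨w, hw, rfl⟩ := Submonoid.exists_list_of_mem_closure hg
  exact Nat.sInf_mem
    (s := {N | ∃ v : List G, (∀ a ∈ v, a ∈ S) ∧ v.length = N ∧ v.prod = w.prod})
    ⟨_, w, hw, rfl, rfl⟩

variable (χ : G →* Multiplicative ℤ)

lemma toAdd_prod_eq_length {w : List G} (hw : ∀ a ∈ w, toAdd (χ a) = 1) :
    toAdd (χ w.prod) = w.length := by
  induction w with
  | nil => simp
  | cons a w ih =>
    simp only [List.forall_mem_cons] at hw
    simp [hw.1, ih hw.2, add_comm]

lemma toAdd_prod_le_length {w : List G} (hw : ∀ a ∈ w, toAdd (χ a) ≤ 1) :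
    toAdd (χ w.prod) ≤ w.length := by
  induction w with
  | nil => simp
  | cons a w ih =>
    simp only [List.forall_mem_cons] at hw
    simp only [List.prod_cons, map_mul, toAdd_mul, List.length_cons, Nat.cast_succ]
    linarith [hw.1, ih hw.2]

lemma prod_mem_closure_of_toAdd_eq_length (hχ : ∀ s ∈ S, toAdd (χ s) ≤ 1) {w : List G}
    (hw : ∀ a ∈ w, a ∈ S) (h : toAdd (χ w.prod) = w.length) :
    w.prod ∈ Submonoid.closure {a ∈ S | toAdd (χ a) = 1} := by
  induction w with
  | nil => exact Submonoid.one_mem _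
  | cons a w ih =>
    simp only [List.forall_mem_cons] at hw
    simp only [List.prod_cons, map_mul, toAdd_mul, List.length_cons, Nat.cast_succ] at h ⊢
    have ha := hχ a hw.1
    have hw' := toAdd_prod_le_length χ fun b hb => hχ b (hw.2 b hb)
    exact Submonoid.mul_mem _ (Submonoid.subset_closure ⟨hw.1, by linarith⟩)
      (ih hw.2 (by linarith))

variable {χ}

lemma toAdd_le_wordLength (hχ : ∀ s ∈ S, toAdd (χ s) ≤ 1) {g : G}
    (hg : g ∈ Submonoid.closure S) :
    toAdd (χ g) ≤ wordLength S g := by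
  obtain ⟨w, hw, hlen, rfl⟩ := exists_length_eq_wordLength hg
  exact hlen ▸ toAdd_prod_le_length χ fun a ha => hχ a (hw a ha)

/-- A geodesic word on which `χ` attains the length bound uses only letters with `χ = 1`. -/
lemma mem_closure_of_wordLength_eq (hχ : ∀ s ∈ S, toAdd (χ s) ≤ 1) {g : G}
    (hg : g ∈ Submonoid.closure S)
    (h : (wordLength S g : ℤ) = toAdd (χ g)) :
    g ∈ Submonoid.closure {a ∈ S | toAdd (χ a) = 1} := by
  obtain ⟨w, hw, hlen, rfl⟩ := exists_length_eq_wordLength hg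
  exact prod_mem_closure_of_toAdd_eq_length χ hχ hw (by rw [hlen, h])

end WordLength

section Positive

open Multiplicative

variable {m : ℕ}

noncomputable def expSum (m : ℕ) : DA m →* Multiplicative ℤ := liftDA (fun _ => ofAdd 1) rfl

lemma gen_eq_genOf (i : Fin 2) : gen 2 (DMat m) i = genOf m (i = 1) := by
  fin_cases i <;> rfl

@[simp] lemma toAdd_expSum_genOf (c : Bool) : toAdd (expSum m (genOf m c)) = 1 := by
  simp [expSum]

lemma toAdd_expSum_le_one : ∀ s ∈ genSet 2 (DMat m), toAdd (expSum m s) ≤ 1 := by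
  rintro _ ⟨i, rfl | rfl⟩ <;> simp [gen_eq_genOf]

lemma genOf_mem_gens (c : Bool) :
    genOf m c ∈ ({gen 2 (DMat m) 0, gen 2 (DMat m) 1} : Set (DA m)) := by
  cases c
  exacts [Or.inl rfl, Or.inr rfl]

lemma posElt_genOf (c : Bool) : posElt m (genOf m c) :=
  Submonoid.subset_closure (genOf_mem_gens c)

lemma posElt_wordProd (W : List Bool) : posElt m (wordProd m W) :=
  Submonoid.list_prod_mem _ fun _ hx => by
    obtain ⟨c, -, rfl⟩ := List.mem_map.1 hx
    exact posElt_genOf c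

lemma posElt_Delta : posElt m (Delta m) :=
  wordProd_altWord (m := m) false ▸ posElt_wordProd _

lemma wordLength_eq_expSum {g : DA m} (hg : posElt m g) :
    (ℓD m g : ℤ) = toAdd (expSum m g) := by
  refine le_antisymm ?_ (toAdd_le_wordLength toAdd_expSum_le_one (mem_closure_genSet g))
  obtain ⟨w, hw, rfl⟩ := Submonoid.exists_list_of_mem_closure hg
  have hw' : ∀ a ∈ w, ∃ c, a = genOf m c := by
    intro a ha
    rcases hw a ha with rfl | rfl
    exacts [⟨false, rfl⟩, ⟨true, rfl⟩]
  rw [toAdd_prod_eq_length _ fun a ha => by obtain ⟨c, rfl⟩ := hw' a ha; simp]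
  exact_mod_cast wordLength_prod_le fun a ha => by
    obtain ⟨c, rfl⟩ := hw' a ha
    exact ⟨_, Or.inl rfl⟩

lemma posElt_of_wordLength_eq {g : DA m} (h : (ℓD m g : ℤ) = toAdd (expSum m g)) :
    posElt m g := by
  refine Submonoid.closure_mono ?_
    (mem_closure_of_wordLength_eq toAdd_expSum_le_one (mem_closure_genSet g) h)
  rintro _ ⟨⟨i, rfl | rfl⟩, hs⟩
  · fin_cases i
    exacts [Or.inl rfl, Or.inr rfl]
  · simp [gen_eq_genOf] at hs

lemma isLeftDiv_mul_of_posElt {x y : DA m} (hx : posElt m x) (hy : posElt m y) :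
    IsLeftDiv (ℓD m) x (x * y) := by
  unfold IsLeftDiv
  zify
  rw [inv_mul_cancel_left, wordLength_eq_expSum hx, wordLength_eq_expSum hy,
    wordLength_eq_expSum (Submonoid.mul_mem _ hx hy), map_mul, toAdd_mul]

lemma posElt_mul_inv_of_isRightDiv {g h : DA m} (hg : posElt m g) (hh : posElt m h)
    (hd : IsRightDiv (ℓD m) h g) : posElt m (g * h⁻¹) := by
  refine posElt_of_wordLength_eq ?_
  unfold IsRightDiv at hd
  zify at hd
  rw [wordLength_eq_expSum hg, wordLength_eq_expSum hh] at hd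
  rw [map_mul, map_inv, toAdd_mul, toAdd_inv]
  linarith

end Positive

section Counting

open Finset

variable {m : ℕ}

def leadCount (c : Bool) : List Bool → ℕ
  | [] => 0
  | d :: W => if d = c then leadCount c W + 1 else 0

lemma head?_drop_of_lt_leadCount {c : Bool} {W : List Bool} {t : ℕ} (ht : t < leadCount c W) :
    (W.drop t).head? = some c := by
  induction W generalizing t with
  | nil => simp [leadCount] at ht
  | cons d W ih =>
    unfold leadCount at ht
    split at ht
    · rcases t with _ | t
      · simp [*]
      · exact ih (by omega)
    · omega

lemma head?_drop_leadCount_ne (c : Bool) (W : List Bool) :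
    (W.drop (leadCount c W)).head? ≠ some c := by
  induction W with
  | nil => simp [leadCount]
  | cons d W ih =>
    unfold leadCount
    split
    · exact ih
    · simpa

lemma fst_le_fst_mulGen (c : Bool) (z : ℤ × List Bool) : z.1 ≤ (mulGen m c z).1 := by
  unfold mulGen
  split <;> simp

lemma fst_mulGenInv_le (c : Bool) (z : ℤ × List Bool) : (mulGenInv m c z).1 ≤ z.1 := by
  unfold mulGenInv
  split <;> simp

lemma fst_iterate_mulGenInv_le (c : Bool) (n : ℕ) (z : ℤ × List Bool) :
    ((mulGenInv m c)^[n] z).1 ≤ z.1 := by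
  induction n with
  | zero => rfl
  | succ n ih =>
    rw [Function.iterate_succ_apply']
    exact (fst_mulGenInv_le c _).trans ih

lemma iterate_mulGenInv_of_le_leadCount {c : Bool} (k : ℤ) {W : List Bool} {t : ℕ}
    (ht : t ≤ leadCount c W) : (mulGenInv m c)^[t] (k, W) = (k, W.drop t) := by
  induction t with
  | zero => rfl
  | succ t ih =>
    rw [Function.iterate_succ_apply', ih (by omega), mulGenInv,
      if_pos (head?_drop_of_lt_leadCount (by omega)), List.tail_drop]

lemma fst_iterate_mulGenInv_of_head?_ne (hm : 2 ≤ m) {c : Bool} {z : ℤ × List Bool}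
    (hz : z.2.head? ≠ some c) (n : ℕ) : ((mulGenInv m c)^[n] z).1 = z.1 - n := by
  suffices ∀ n, ((mulGenInv m c)^[n] z).1 = z.1 - n ∧
      ((mulGenInv m c)^[n] z).2.head? ≠ some c from
    (this n).1
  intro n
  induction n with
  | zero => simpa using hz
  | succ n ih =>
    rw [Function.iterate_succ_apply', mulGenInv, if_neg ih.2, show m - 1 = m - 2 + 1 by omega]
    simp [ih.1]
    ring

def mulInvSyllables (m : ℕ) (c : Bool) (s t : ℕ) (z : ℤ × List Bool) : ℤ × List Bool :=
  (mulGenInv m c)^[s] ((mulGenInv m (!c))^[t] z)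

lemma fst_mulInvSyllables_of_lt_leadCount (hm : 2 ≤ m) (c : Bool) (s : ℕ) {t : ℕ} (k : ℤ)
    {W : List Bool} (ht : t < leadCount (!c) W) : (mulInvSyllables m c s t (k, W)).1 = k - s := by
  rw [mulInvSyllables, iterate_mulGenInv_of_le_leadCount k ht.le,
    fst_iterate_mulGenInv_of_head?_ne hm (by simp [head?_drop_of_lt_leadCount ht])]

lemma fst_mulInvSyllables_le (hm : 2 ≤ m) (c : Bool) (s : ℕ) {t : ℕ} (k : ℤ) {W : List Bool}
    (ht : leadCount (!c) W ≤ t) :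
    (mulInvSyllables m c s t (k, W)).1 ≤ k - (t - leadCount (!c) W : ℕ) := by
  refine (fst_iterate_mulGenInv_le c s _).trans (le_of_eq ?_)
  rw [← Nat.sub_add_cancel ht, Function.iterate_add_apply,
    iterate_mulGenInv_of_le_leadCount k le_rfl,
    fst_iterate_mulGenInv_of_head?_ne hm (head?_drop_leadCount_ne _ W), Nat.add_sub_cancel]

lemma card_le_of_forall_le_add {S : Finset ℕ} {K : ℕ}
    (h : ∀ s ∈ S, ∀ s' ∈ S, s' ≤ s + K) : #S ≤ K + 1 := by
  rcases S.eq_empty_or_nonempty with rfl | hS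
  · simp
  calc #S ≤ #(Icc (S.min' hS) (S.min' hS + K)) :=
        card_le_card fun s hs => mem_Icc.2 ⟨min'_le _ _ hs, h _ (min'_mem _ _) _ hs⟩
    _ = K + 1 := by simp only [Nat.card_Icc]; omega

/-- The admissible `s` form a window of width `k`: while the letters `!c` removed stay inside
the leading `!c`-block of `W`, every `c⁻¹` costs a `Δ`; beyond it, every `(!c)⁻¹` does. -/
lemma card_filter_fst_mulInvSyllables_nonneg_le (hm : 2 ≤ m) (c : Bool) (k : ℤ) (W : List Bool)
    (l : ℕ) :
    #{s ∈ range (l + 1) | 0 ≤ (mulInvSyllables m c s (l - s) (k, W)).1} ≤ k.toNat + 1 := by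
  refine card_le_of_forall_le_add fun s hs s' hs' => ?_
  simp only [mem_filter, mem_range] at hs hs'
  by_cases h' : l - s' < leadCount (!c) W
  · rw [fst_mulInvSyllables_of_lt_leadCount hm c s' k h'] at hs'
    omega
  by_cases h : l - s < leadCount (!c) W
  · omega
  have := fst_mulInvSyllables_le hm c s k (not_lt.1 h)
  omega

lemma normalForm_mul_inv_pow (hm : 2 ≤ m) (g : DA m) (c : Bool) (n : ℕ) :
    normalForm hm (g * (genOf m c ^ n)⁻¹) = (mulGenInv m c)^[n] (normalForm hm g) := by
  induction n with
  | zero => simp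
  | succ n ih => rw [pow_succ', mul_inv_rev, ← mul_assoc, normalForm_mul_genOf_inv, ih,
      Function.iterate_succ_apply']

lemma normalForm_mul_inv_pow_mul_pow (hm : 2 ≤ m) (g : DA m) (c : Bool) (s t : ℕ) :
    normalForm hm (g * (genOf m c ^ s * genOf m (!c) ^ t)⁻¹) =
      mulInvSyllables m c s t (normalForm hm g) := by
  rw [mul_inv_rev, ← mul_assoc, normalForm_mul_inv_pow, normalForm_mul_inv_pow, mulInvSyllables]

lemma fst_normalForm_nonneg (hm : 2 ≤ m) {g : DA m} (hg : posElt m g) :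
    0 ≤ (normalForm hm g).1 := by
  induction hg using Submonoid.closure_induction_right with
  | one => simp
  | mul_right x _ y hy ih =>
    obtain ⟨c, rfl⟩ : ∃ c, y = genOf m c := by
      rcases hy with rfl | rfl
      exacts [⟨false, rfl⟩, ⟨true, rfl⟩]
    exact ih.trans (by rw [normalForm_mul_genOf]; exact fst_le_fst_mulGen c _)

lemma isLeftDiv_Delta_pow_normalForm (hm : 2 ≤ m) {g : DA m} (hg : posElt m g) :
    IsLeftDiv (ℓD m) (Delta m ^ (normalForm hm g).1.toNat) g := by
  obtain ⟨n, hn⟩ := Int.eq_ofNat_of_zero_le (fst_normalForm_nonneg hm hg)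
  have hg' := nfEval_normalForm hm g
  rw [nfEval, hn, zpow_natCast] at hg'
  rw [hn, Int.toNat_natCast, ← hg']
  exact isLeftDiv_mul_of_posElt (Submonoid.pow_mem _ posElt_Delta n) (posElt_wordProd _)

lemma fst_mulInvSyllables_nonneg_of_isRightDiv (hm : 2 ≤ m) {g : DA m} (hg : posElt m g)
    (c : Bool) {s t : ℕ} (hd : IsRightDiv (ℓD m) (genOf m c ^ s * genOf m (!c) ^ t) g) :
    0 ≤ (mulInvSyllables m c s t (normalForm hm g)).1 := by
  rw [← normalForm_mul_inv_pow_mul_pow]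
  refine fst_normalForm_nonneg hm (posElt_mul_inv_of_isRightDiv hg ?_ hd)
  exact Submonoid.mul_mem _ (Submonoid.pow_mem _ (posElt_genOf c) s)
    (Submonoid.pow_mem _ (posElt_genOf (!c)) t)

end Counting

/-- **Lemma.** For a positive element `g` of `DA(m)` and `{a,b} = {x₁,x₂}`, the number
of right divisors of `g` of the form `a^s b^t` with `s + t = l` is at most `d(g) + 1`. -/
theorem count_two_syllable_right_divisors
    (m : ℕ) (hm : 3 ≤ m) (g : DA m) (hpos : posElt m g)
    (r : ℕ) (hr : IsMaxDeltaPow m r g)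
    (l : ℕ) (a b : DA m)
    (hab : (a = gen 2 (DMat m) 0 ∧ b = gen 2 (DMat m) 1) ∨
           (a = gen 2 (DMat m) 1 ∧ b = gen 2 (DMat m) 0)) :
    {h : DA m | IsRightDiv (ℓD m) h g ∧
        ∃ s t : ℕ, s + t = l ∧ h = a ^ s * b ^ t}.Finite ∧
    {h : DA m | IsRightDiv (ℓD m) h g ∧
        ∃ s t : ℕ, s + t = l ∧ h = a ^ s * b ^ t}.ncard ≤ r + 1 := by
  classical
  have hm₂ : 2 ≤ m := by omega
  obtain ⟨c, rfl, rfl⟩ : ∃ c, a = genOf m c ∧ b = genOf m (!c) := by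
    rcases hab with ⟨rfl, rfl⟩ | ⟨rfl, rfl⟩
    exacts [⟨false, rfl, rfl⟩, ⟨true, rfl, rfl⟩]
  set S := {s ∈ Finset.range (l + 1) |
    0 ≤ (mulInvSyllables m c s (l - s) (normalForm hm₂ g)).1}
  have hsub : {h | IsRightDiv (ℓD m) h g ∧
      ∃ s t : ℕ, s + t = l ∧ h = genOf m c ^ s * genOf m (!c) ^ t} ⊆
      ↑(S.image fun s => genOf m c ^ s * genOf m (!c) ^ (l - s)) := by
    rintro _ ⟨hd, s, t, rfl, rfl⟩
    refine Finset.mem_image.2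
      ⟨s, Finset.mem_filter.2 ⟨Finset.mem_range.2 (by omega), ?_⟩, ?_⟩
    all_goals rw [Nat.add_sub_cancel_left]
    exact fst_mulInvSyllables_nonneg_of_isRightDiv hm₂ hpos c hd
  have hk := hr.2 _ (isLeftDiv_Delta_pow_normalForm hm₂ hpos)
  have hS : S.card ≤ r + 1 := (card_filter_fst_mulInvSyllables_nonneg_le hm₂ c
    (normalForm hm₂ g).1 (normalForm hm₂ g).2 l).trans (by omega)
  refine ⟨(Finset.finite_toSet _).subset hsub, ?_⟩
  calc _ ≤ (S.image fun s => genOf m c ^ s * genOf m (!c) ^ (l - s) : Set (DA m)).ncard :=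
        Set.ncard_le_ncard hsub (Finset.finite_toSet _)
    _ ≤ r + 1 := by rw [Set.ncard_coe_finset]; exact Finset.card_image_le.trans hS

end ArtinRD
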